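/- arXiv:1711.07017 — 2 statements merged into one kernel-verified Lean document; each statement's English description precedes it below -/
import Mathlib

section
/- Let $m \in \mathbb{N}$ and $d \ge 1$. Define knots $\xi^k := ((k/(m+1))^{1/d}, 0, \dots, 0) \in [0,1)^d$ and weights $\lambda_k := 1/(m+1)$ for $k = 1, \dots, m$. Then for every $y \in [0,1)$, $\left| \sum_{k=1}^m \lambda_k \chi_{[\mathbf{0}, (y,\dots,y))}(\xi^k) - y^d \right| \le \frac{1}{m+1}$, where $\chi_{[\mathbf{0},(y,\dots,y))}$ is the characteristic function of the anchored cube $[0,y)^d$. -/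
/-!
The knot `ξ^k` lies in `[0,y)^d` exactly when `k < t := (m+1) y^d`, so the quadrature
returns `N/(m+1)`, where `N` counts the integers `1 ≤ k ≤ m` below `t`. Since `0 ≤ t ≤ m+1`,
`N = ⌈t⌉ - 1`, whence `|N - t| ≤ 1` and the error `|N - t|/(m+1)` is at most `1/(m+1)`.
-/

lemma rpow_one_div_lt_iff_lt_pow {d : ℕ} (hd : d ≠ 0) {a y : ℝ} (ha : 0 ≤ a) (hy : 0 ≤ y) :
    a ^ ((1 : ℝ) / d) < y ↔ a < y ^ d := by
  rw [one_div, Real.rpow_inv_lt_iff_of_pos ha hy (by positivity), Real.rpow_natCast]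

lemma root_mem_anchoredCube_iff {d : ℕ} (hd : d ≠ 0) {a y : ℝ} (ha : 0 ≤ a) (hy : 0 ≤ y) :
    (fun j : Fin d => if (j : ℕ) = 0 then a ^ ((1 : ℝ) / d) else 0) ∈
      {x : Fin d → ℝ | ∀ j, 0 ≤ x j ∧ x j < y} ↔ a < y ^ d := by
  rw [← rpow_one_div_lt_iff_lt_pow hd ha hy]
  constructor
  · intro h
    simpa using (h ⟨0, Nat.pos_of_ne_zero hd⟩).2
  · intro h j
    have hroot : 0 ≤ a ^ ((1 : ℝ) / d) := Real.rpow_nonneg ha _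
    dsimp only
    split_ifs
    · exact ⟨hroot, h⟩
    · exact ⟨le_rfl, hroot.trans_lt h⟩

lemma filter_Icc_natCast_lt_eq_Ico {m : ℕ} {t : ℝ} (ht : t ≤ m + 1) :
    (Finset.Icc 1 m).filter (fun k : ℕ => (k : ℝ) < t) = Finset.Ico 1 ⌈t⌉₊ := by
  ext k
  simp only [Finset.mem_filter, Finset.mem_Icc, Finset.mem_Ico, Nat.lt_ceil]
  exact ⟨fun ⟨⟨h1, _⟩, hkt⟩ => ⟨h1, hkt⟩,
    fun ⟨h1, hkt⟩ => ⟨⟨h1, Nat.lt_add_one_iff.mp (by exact_mod_cast hkt.trans_le ht)⟩, hkt⟩⟩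

lemma abs_card_filter_Icc_natCast_lt_sub_le {m : ℕ} {t : ℝ} (ht0 : 0 ≤ t) (ht : t ≤ m + 1) :
    |(((Finset.Icc 1 m).filter (fun k : ℕ => (k : ℝ) < t)).card : ℝ) - t| ≤ 1 := by
  rw [filter_Icc_natCast_lt_eq_Ico ht, Nat.card_Ico, abs_le]
  have hceil_lt := Nat.ceil_lt_add_one ht0
  have hle_ceil := Nat.le_ceil t
  rcases Nat.eq_zero_or_pos ⌈t⌉₊ with h | h
  · rw [h] at hle_ceil ⊢
    push_cast at hle_ceil ⊢
    constructor <;> linarith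
  · rw [Nat.cast_sub h]
    push_cast
    constructor <;> linarith

/-- Numerical integration of characteristic functions of anchored cubes `[0,y)^d` by the
quadrature with knots `ξ^k = ((k/(m+1))^{1/d}, 0, …, 0)` and weights `1/(m+1)`,
`k = 1, …, m`, has error at most `1/(m+1)` for every `y ∈ [0,1)`. -/
theorem stmt7 (m d : ℕ) (hd : 1 ≤ d)
    (ξ : ℕ → Fin d → ℝ)
    (hξ : ∀ k, ξ k = fun j : Fin d => if (j : ℕ) = 0 then ((k : ℝ) / (m + 1)) ^ ((1 : ℝ) / d) else 0)
    (y : ℝ) (hy : y ∈ Set.Ico (0 : ℝ) 1) :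
    |(∑ k ∈ Finset.Icc 1 m, ((m : ℝ) + 1)⁻¹ *
        Set.indicator {x : Fin d → ℝ | ∀ j, 0 ≤ x j ∧ x j < y} (fun _ => (1 : ℝ)) (ξ k))
      - y ^ d| ≤ ((m : ℝ) + 1)⁻¹ := by
  obtain ⟨hy0, hy1⟩ := hy
  have hm : (0 : ℝ) < m + 1 := by positivity
  set t := ((m : ℝ) + 1) * y ^ d
  have hmem : ∀ k : ℕ, ξ k ∈ {x : Fin d → ℝ | ∀ j, 0 ≤ x j ∧ x j < y} ↔ (k : ℝ) < t := by
    intro k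
    rw [hξ, root_mem_anchoredCube_iff (by omega) (by positivity) hy0, div_lt_iff₀' hm]
  have hsum : ∑ k ∈ Finset.Icc 1 m, ((m : ℝ) + 1)⁻¹ *
        Set.indicator {x : Fin d → ℝ | ∀ j, 0 ≤ x j ∧ x j < y} (fun _ => (1 : ℝ)) (ξ k) =
      ((m : ℝ) + 1)⁻¹ * ((Finset.Icc 1 m).filter (fun k : ℕ => (k : ℝ) < t)).card := by
    simp only [Set.indicator_apply, hmem, ← Finset.mul_sum, Finset.sum_boole]
  have ht_le : t ≤ m + 1 := by
    have : y ^ d ≤ 1 := pow_le_one₀ hy0 hy1.le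
    nlinarith
  calc _ = ((m : ℝ) + 1)⁻¹ * |((Finset.Icc 1 m).filter (fun k : ℕ => (k : ℝ) < t)).card - t| := by
        rw [hsum, show y ^ d = ((m : ℝ) + 1)⁻¹ * t from (inv_mul_cancel_left₀ hm.ne' _).symm,
          ← mul_sub, abs_mul, abs_of_pos (inv_pos.mpr hm)]
    _ ≤ ((m : ℝ) + 1)⁻¹ := mul_le_of_le_one_right (by positivity)
        (abs_card_filter_Icc_natCast_lt_sub_le (by positivity) ht_le)
end

section
/- Let $E \subset [0,1)^d$ be a Lebesgue measurable set and $2 \le p < \infty$. Then there exists a set $\xi = \{\xi^1,\dots,\xi^m\} \subset [0,1)^d$ of $m$ points such that $\left( \int_{[0,1)^d} \left| |E| - \frac{1}{m}\sum_{\mu=1}^m \tilde\chi_E(\xi^\mu - \mathbf{z}) \right|^p d\mathbf{z} \right)^{1/p} \le C p^{1/2} m^{-1/2}$, where $\tilde\chi_E$ is the 1-periodization of $\chi_E$ and $C$ is an absolute constant. -/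
open MeasureTheory Real
open scoped ENNReal

/-- The unit cube `[0,1)^d`. -/
def unitCube (d : ℕ) : Set (Fin d → ℝ) := Set.univ.pi fun _ => Set.Ico (0 : ℝ) 1

/-- The 1-periodization `tilde χ_E` of the characteristic function of `E`. -/
noncomputable def perChi {d : ℕ} (E : Set (Fin d → ℝ)) (x : Fin d → ℝ) : ℝ :=
  ∑' n : Fin d → ℤ, Set.indicator E (fun _ => (1 : ℝ)) (x + fun j => (n j : ℝ))

/-!
Choose the `m` points independently and uniformly in `[0,1)^d`. For a fixed translation `z`, the
numbers `χ̃_E(ξ^μ - z) - |E|` are independent, centred and take values in an interval of length one: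
the mean of `χ̃_E(· - z)` over the cube is `|E|` because the cube and its translate by `z` are both
fundamental domains of `ℤ^d`. By Hoeffding's lemma their sum is sub-Gaussian with variance proxy
`m / 4`, so its `p`-th absolute moment is at most `2 (m p / 4)^{p/2}`. Integrating also over `z`
(Fubini), some configuration of points in the cube has `‖|E| - Q_m(χ̃_E(· - z), ξ)‖_p^p` at most
`2 (p / (4m))^{p/2}`, and taking `p`-th roots gives the claim with `C = 1`.
-/

open ProbabilityTheory
open scoped NNReal Pointwise

section Periodization

variable {d : ℕ} {E : Set (Fin d → ℝ)}

lemma measurableSet_unitCube : MeasurableSet (unitCube d) :=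
  MeasurableSet.univ_pi fun _ => measurableSet_Ico

lemma volume_unitCube : volume (unitCube d) = 1 := by
  simp [unitCube, volume_pi_pi, Real.volume_Ico]

instance : IsProbabilityMeasure (volume.restrict (unitCube d)) :=
  ⟨by rw [Measure.restrict_apply_univ, volume_unitCube]⟩

def periodization (E : Set (Fin d → ℝ)) : Set (Fin d → ℝ) :=
  {x | ∃ n : Fin d → ℤ, (x + fun j => (n j : ℝ)) ∈ E}

lemma measurableSet_periodization (hE : MeasurableSet E) : MeasurableSet (periodization E) := by
  simp only [periodization, Set.ofPred_exists]
  exact MeasurableSet.iUnion fun n => measurable_add_const _ hE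

lemma add_intCast_mem_unitCube_iff (x : Fin d → ℝ) (n : Fin d → ℤ) :
    (x + fun j => (n j : ℝ)) ∈ unitCube d ↔ n = fun j => -⌊x j⌋ := by
  simp only [unitCube, Set.mem_pi, Set.mem_univ, true_implies, Pi.add_apply, funext_iff]
  refine forall_congr' fun j => ?_
  rw [← Int.floor_eq_zero_iff, Int.floor_add_intCast]
  omega

lemma perChi_eq_indicator (hE : E ⊆ unitCube d) (x : Fin d → ℝ) :
    perChi E x = (periodization E).indicator 1 x := by
  set n₀ : Fin d → ℤ := fun j => -⌊x j⌋
  have hunique : ∀ n, (x + fun j => (n j : ℝ)) ∈ E → n = n₀ := fun n hn =>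
    (add_intCast_mem_unitCube_iff x n).1 (hE hn)
  have hmem : x ∈ periodization E ↔ (x + fun j => (n₀ j : ℝ)) ∈ E :=
    ⟨fun ⟨n, hn⟩ => hunique n hn ▸ hn, fun h => ⟨n₀, h⟩⟩
  rw [perChi, tsum_eq_single n₀ fun n hn => Set.indicator_of_notMem (mt (hunique n) hn) _]
  by_cases hx : x ∈ periodization E
  · simp [hx, hmem.1 hx]
  · simp [hx, mt hmem.2 hx]

lemma periodization_inter_unitCube (hE : E ⊆ unitCube d) : periodization E ∩ unitCube d = E := by
  ext x
  have hx0 : (x + fun j => ((0 : Fin d → ℤ) j : ℝ)) = x := by ext; simp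
  refine ⟨fun ⟨⟨n, hn⟩, hx⟩ => ?_, fun hx => ⟨⟨0, by rwa [hx0]⟩, hE hx⟩⟩
  have h0 := (add_intCast_mem_unitCube_iff x 0).1 (by rwa [hx0])
  obtain rfl : n = 0 := ((add_intCast_mem_unitCube_iff x n).1 (hE hn)).trans h0.symm
  exact hx0 ▸ hn

lemma add_intCast_mem_periodization_iff (x : Fin d → ℝ) (n : Fin d → ℤ) :
    (x + fun j => (n j : ℝ)) ∈ periodization E ↔ x ∈ periodization E := by
  constructor
  · rintro ⟨k, hk⟩
    exact ⟨n + k, by simpa [add_assoc, Pi.add_def] using hk⟩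
  · rintro ⟨k, hk⟩
    refine ⟨k - n, ?_⟩
    convert hk using 1
    ext j; simp

abbrev intLattice (d : ℕ) : AddSubgroup (Fin d → ℝ) :=
  (Submodule.span ℤ (Set.range (Pi.basisFun ℝ (Fin d)))).toAddSubgroup

instance : Countable (intLattice d) :=
  inferInstanceAs (Countable (Submodule.span ℤ (Set.range (Pi.basisFun ℝ (Fin d)))))

lemma mem_intLattice_iff (v : Fin d → ℝ) :
    v ∈ intLattice d ↔ ∃ n : Fin d → ℤ, v = fun j => (n j : ℝ) := by
  rw [Submodule.mem_toAddSubgroup, (Pi.basisFun ℝ (Fin d)).mem_span_iff_repr_mem ℤ v]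
  simp [funext_iff, Classical.skolem, eq_comm]

lemma isAddFundamentalDomain_unitCube :
    IsAddFundamentalDomain (intLattice d) (unitCube d) volume := by
  simpa [unitCube, ZSpan.fundamentalDomain_pi_basisFun] using
    ZSpan.isAddFundamentalDomain' (Pi.basisFun ℝ (Fin d)) volume

lemma volume_unitCube_inter_preimage_sub (hE : MeasurableSet E) (hEc : E ⊆ unitCube d)
    (z : Fin d → ℝ) : volume (unitCube d ∩ (· - z) ⁻¹' periodization E) = volume E := by
  have hinv : ∀ g : intLattice d,
      (g +ᵥ ·) ⁻¹' ((· - z) ⁻¹' periodization E) = (· - z) ⁻¹' periodization E := by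
    rintro ⟨g, hg⟩
    obtain ⟨n, rfl⟩ := (mem_intLattice_iff g).1 hg
    ext x
    simp only [Set.mem_preimage, AddSubgroup.vadd_def, vadd_eq_add]
    rw [← add_intCast_mem_periodization_iff (x - z) n]
    congr! 1
    abel
  have hmeas : MeasurableSet ((· - z) ⁻¹' periodization E) :=
    measurable_sub_const z (measurableSet_periodization hE)
  rw [Set.inter_comm, isAddFundamentalDomain_unitCube.measure_set_eq
    (isAddFundamentalDomain_unitCube.vadd_of_comm z) hmeas hinv]
  have htranslate : (· - z) ⁻¹' periodization E ∩ (z +ᵥ unitCube d)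
      = z +ᵥ (periodization E ∩ unitCube d) := by
    rw [Set.vadd_set_inter]
    congr 1
    ext x
    simp [Set.mem_vadd_set_iff_neg_vadd_mem, sub_eq_neg_add]
  rw [htranslate, measure_vadd, periodization_inter_unitCube hEc]

lemma setIntegral_indicator_periodization_sub (hE : MeasurableSet E) (hEc : E ⊆ unitCube d)
    (z : Fin d → ℝ) :
    ∫ x in unitCube d, (periodization E).indicator 1 (x - z) = (volume E).toReal := by
  have hmeas : MeasurableSet ((· - z) ⁻¹' periodization E) :=
    measurable_sub_const z (measurableSet_periodization hE)
  simp_rw [← Set.indicator_comp_right (· - z) (g := 1)]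
  rw [Pi.one_comp, integral_indicator_one hmeas, measureReal_restrict_apply hmeas, Set.inter_comm,
    measureReal_def, volume_unitCube_inter_preimage_sub hE hEc]

end Periodization

lemma abs_rpow_le_mul_exp {p l : ℝ} (hp : 0 < p) (hl : 0 < l) (s : ℝ) :
    |s| ^ p ≤ (p / l) ^ p * exp (l * |s| - p) := by
  set y := l * |s| / p with hy_def
  have hy : 0 ≤ y := by positivity
  have hs : |s| = p / l * y := by rw [hy_def]; field_simp
  calc |s| ^ p = (p / l) ^ p * y ^ p := by rw [hs, mul_rpow (by positivity) hy]
    _ ≤ (p / l) ^ p * exp (y - 1) ^ p := by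
        gcongr
        linarith [add_one_le_exp (y - 1)]
    _ = (p / l) ^ p * exp (l * |s| - p) := by
        rw [← exp_mul]
        congr 2
        rw [hy_def]
        field_simp

section SampleMean

variable {Ω : Type*} {mΩ : MeasurableSpace Ω} {μ : Measure Ω}

namespace ProbabilityTheory.HasSubgaussianMGF

lemma integral_abs_rpow_le {X : Ω → ℝ} {c : ℝ≥0} (h : HasSubgaussianMGF X c μ)
    (hc : 0 < c) {p : ℝ} (hp : 0 < p) :
    ∫ ω, |X ω| ^ p ∂μ ≤ 2 * (c * p) ^ (p / 2) := by
  set l := √(p / c)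
  have hl : 0 < l := by positivity
  have hcl : (c : ℝ) * l ^ 2 / 2 = p / 2 := by
    rw [sq_sqrt (by positivity)]; field_simp
  have hpl : (p / l) ^ p = (c * p) ^ (p / 2) := by
    have : p / l = √(c * p) := by
      rw [div_eq_iff hl.ne', ← sqrt_mul (by positivity), show c * p * (p / c) = p ^ 2 by field_simp,
        sqrt_sq hp.le]
    rw [this, sqrt_eq_rpow, ← rpow_mul (by positivity)]
    ring_nf
  have hpoint : ∀ ω, |X ω| ^ p ≤ (p / l) ^ p * exp (-p) * (exp (l * X ω) + exp (-l * X ω)) := by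
    intro ω
    refine (abs_rpow_le_mul_exp hp hl (X ω)).trans ?_
    rw [mul_assoc, sub_eq_neg_add, exp_add]
    gcongr
    rcases abs_cases (X ω) with ⟨h, -⟩ | ⟨h, -⟩ <;> rw [h]
    · exact le_add_of_nonneg_right (exp_pos _).le
    · rw [mul_neg, ← neg_mul]; exact le_add_of_nonneg_left (exp_pos _).le
  calc ∫ ω, |X ω| ^ p ∂μ
      ≤ ∫ ω, (p / l) ^ p * exp (-p) * (exp (l * X ω) + exp (-l * X ω)) ∂μ :=
        integral_mono_of_nonneg (ae_of_all _ fun ω => by positivity)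
          (((h.integrable_exp_mul l).add (h.integrable_exp_mul (-l))).const_mul _)
          (ae_of_all _ hpoint)
    _ = (p / l) ^ p * exp (-p) * (mgf X μ l + mgf X μ (-l)) := by
        rw [integral_const_mul, integral_add (h.integrable_exp_mul l) (h.integrable_exp_mul (-l))]
        rfl
    _ ≤ (p / l) ^ p * exp (-p) * (exp (c * l ^ 2 / 2) + exp (c * (-l) ^ 2 / 2)) := by
        gcongr <;> exact h.mgf_le _
    _ = 2 * (c * p) ^ (p / 2) * exp (-(p / 2)) := by
        rw [neg_sq, hcl, hpl, show -(p / 2) = -p + p / 2 by ring, exp_add]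
        ring
    _ ≤ 2 * (c * p) ^ (p / 2) :=
        mul_le_of_le_one_right (by positivity) (exp_le_one_iff.2 (by linarith))

lemma sum_pi [IsProbabilityMeasure μ] {ι : Type*} [Fintype ι] {X : Ω → ℝ}
    {c : ℝ≥0} (h : HasSubgaussianMGF X c μ) :
    HasSubgaussianMGF (fun ω : ι → Ω => ∑ i, X (ω i)) (Fintype.card ι * c)
      (Measure.pi fun _ => μ) := by
  have hcoord : ∀ i, HasSubgaussianMGF (fun ω : ι → Ω => X (ω i)) c (Measure.pi fun _ => μ) :=
    fun i => .of_map (measurable_pi_apply i).aemeasurable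
      (by rwa [(measurePreserving_eval (fun _ => μ) i).map_eq])
  simpa using sum_of_iIndepFun
    (iIndepFun_pi (X := fun _ => X) fun _ => h.aemeasurable) (s := Finset.univ)
    fun i _ => hcoord i

end ProbabilityTheory.HasSubgaussianMGF

/-- The Quasi-Monte Carlo rule `Q_m(f, ξ)`. -/
noncomputable def sampleMean {m : ℕ} (f : Ω → ℝ) (ξ : Fin m → Ω) : ℝ :=
  (m : ℝ)⁻¹ * ∑ i, f (ξ i)

lemma sampleMean_mem_Icc {m : ℕ} {f : Ω → ℝ} (hf : ∀ x, f x ∈ Set.Icc 0 1) (ξ : Fin m → Ω) :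
    sampleMean f ξ ∈ Set.Icc 0 1 := by
  have hsum : ∑ i, f (ξ i) ≤ m := by
    simpa using Finset.sum_le_card_nsmul Finset.univ _ 1 fun i _ => (hf (ξ i)).2
  exact ⟨mul_nonneg (by positivity) (Finset.sum_nonneg fun i _ => (hf (ξ i)).1),
    (mul_le_mul_of_nonneg_left hsum (by positivity)).trans
      (inv_mul_le_one_of_le₀ le_rfl m.cast_nonneg)⟩

lemma integral_abs_integral_sub_sampleMean_rpow_le [IsProbabilityMeasure μ] {f : Ω → ℝ}
    (hf : Measurable f) (hf01 : ∀ x, f x ∈ Set.Icc 0 1) {p : ℝ} (hp : 0 < p) {m : ℕ}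
    (hm : 0 < m) :
    ∫ ξ, |μ[f] - sampleMean f ξ| ^ p ∂(Measure.pi fun _ : Fin m => μ)
      ≤ 2 * (p / (4 * m)) ^ (p / 2) := by
  have hm' : (0 : ℝ) < m := by exact_mod_cast hm
  have hX := (hasSubgaussianMGF_of_mem_Icc hf.aemeasurable (ae_of_all μ hf01)).sum_pi (ι := Fin m)
  have hpoint : ∀ ξ : Fin m → Ω, |μ[f] - sampleMean f ξ| ^ p
      = (m : ℝ)⁻¹ ^ p * |∑ i, (f (ξ i) - μ[f])| ^ p := by
    intro ξ
    have : μ[f] - sampleMean f ξ = -((m : ℝ)⁻¹ * ∑ i, (f (ξ i) - μ[f])) := by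
      simp [sampleMean, Finset.sum_sub_distrib]
      field_simp
      ring
    rw [this, abs_neg, abs_mul, abs_of_pos (inv_pos.2 hm'),
      mul_rpow (by positivity) (abs_nonneg _)]
  calc ∫ ξ, |μ[f] - sampleMean f ξ| ^ p ∂(Measure.pi fun _ : Fin m => μ)
      = (m : ℝ)⁻¹ ^ p * ∫ ξ, |∑ i, (f (ξ i) - μ[f])| ^ p ∂(Measure.pi fun _ : Fin m => μ) := by
        simp_rw [hpoint]; exact integral_const_mul _ _
    _ ≤ (m : ℝ)⁻¹ ^ p * (2 * (m / 4 * p) ^ (p / 2)) := by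
        gcongr
        refine (hX.integral_abs_rpow_le (by simp [hm]) hp).trans_eq ?_
        norm_num [div_eq_mul_inv]
    _ = 2 * (((m : ℝ)⁻¹ ^ 2) ^ (p / 2) * (m / 4 * p) ^ (p / 2)) := by
        rw [← rpow_natCast, ← rpow_mul (by positivity)]
        ring_nf
    _ = 2 * (p / (4 * m)) ^ (p / 2) := by
        rw [← mul_rpow (by positivity) (by positivity)]
        congr 2
        field_simp

lemma exists_notMem_null_integral_le_of_forall_integral_le {α β : Type*} [MeasurableSpace α]
    [MeasurableSpace β] {μ : Measure α} {ν : Measure β} [IsProbabilityMeasure μ]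
    [IsProbabilityMeasure ν] {F : α → β → ℝ} (hF : Integrable (Function.uncurry F) (μ.prod ν))
    {N : Set α} (hN : μ N = 0) {B : ℝ} (hB : ∀ y, ∫ x, F x y ∂μ ≤ B) :
    ∃ x ∉ N, ∫ y, F x y ∂ν ≤ B := by
  obtain ⟨x, hxN, hx⟩ := exists_notMem_null_le_integral hF.integral_prod_left hN
  simp only [Function.uncurry_apply_pair] at hx
  refine ⟨x, hxN, hx.trans ?_⟩
  rw [integral_integral_swap hF]
  calc ∫ y, ∫ x, F x y ∂μ ∂ν ≤ ∫ _, B ∂ν :=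
        integral_mono hF.integral_prod_right (integrable_const B) hB
    _ = B := by simp

lemma exists_notMem_null_integral_abs_sub_sampleMean_rpow_le {α β : Type*} [MeasurableSpace α]
    [MeasurableSpace β] {μ : Measure α} {ν : Measure β} [IsProbabilityMeasure μ]
    [IsProbabilityMeasure ν] {K : α → β → ℝ} (hK : Measurable (Function.uncurry K))
    (hK01 : ∀ x y, K x y ∈ Set.Icc 0 1) {v : ℝ} (hv : ∀ y, ∫ x, K x y ∂μ = v) {m : ℕ} (hm : 0 < m)
    {N : Set (Fin m → α)} (hN : Measure.pi (fun _ => μ) N = 0) {p : ℝ} (hp : 0 < p) :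
    ∃ ξ ∉ N, ∫ y, |v - sampleMean (K · y) ξ| ^ p ∂ν ≤ 2 * (p / (4 * m)) ^ (p / 2) := by
  refine exists_notMem_null_integral_le_of_forall_integral_le ?_ hN fun y => ?_
  · have hmeas : Measurable fun q : (Fin m → α) × β => sampleMean (K · q.2) q.1 :=
      measurable_const.mul <| Finset.measurable_sum _ fun i _ =>
        hK.comp (((measurable_pi_apply i).comp measurable_fst).prodMk measurable_snd :
          Measurable fun q : (Fin m → α) × β => (q.1 i, q.2))
    refine (integrable_const ((|v| + 1) ^ p)).mono'
      ((measurable_const.sub hmeas).abs.pow_const p).aestronglyMeasurable (ae_of_all _ fun q => ?_)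
    have hq := sampleMean_mem_Icc (fun x => hK01 x q.2) q.1
    rw [Function.uncurry_apply_pair, Real.norm_of_nonneg (rpow_nonneg (abs_nonneg _) p)]
    refine rpow_le_rpow (abs_nonneg _) ?_ hp.le
    calc |v - sampleMean (K · q.2) q.1| ≤ |v| + |sampleMean (K · q.2) q.1| := abs_sub _ _
      _ ≤ |v| + 1 := by rw [abs_of_nonneg hq.1]; gcongr; exact hq.2
  · rw [← hv y]
    exact integral_abs_integral_sub_sampleMean_rpow_le (hK.comp measurable_prodMk_right)
      (fun x => hK01 x y) hp hm

end SampleMean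

lemma rpow_one_div_le_of_le_two_mul_rpow {I p m : ℝ} (hI : 0 ≤ I) (hp : 1 ≤ p) (hm : 0 < m)
    (h : I ≤ 2 * (p / (4 * m)) ^ (p / 2)) :
    I ^ (1 / p) ≤ p ^ ((1 : ℝ) / 2) * m ^ (-(1 : ℝ) / 2) := by
  have hp0 : 0 < p := by linarith
  calc I ^ (1 / p) ≤ (2 * (p / (4 * m)) ^ (p / 2)) ^ (1 / p) := by gcongr
    _ = 2 ^ (1 / p) * (p / (4 * m)) ^ ((1 : ℝ) / 2) := by
        rw [mul_rpow (by norm_num) (by positivity), ← rpow_mul (by positivity)]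
        congr 2
        field_simp
    _ ≤ 2 * (p / (4 * m)) ^ ((1 : ℝ) / 2) := by
        gcongr
        exact rpow_le_self_of_one_le (by norm_num) ((div_le_one hp0).2 hp)
    _ = p ^ ((1 : ℝ) / 2) * m ^ (-(1 : ℝ) / 2) := by
        rw [neg_div, rpow_neg hm.le, ← sqrt_eq_rpow, ← sqrt_eq_rpow, ← sqrt_eq_rpow,
          sqrt_div' _ (by positivity), sqrt_mul' _ hm.le, show (4 : ℝ) = 2 ^ 2 by norm_num,
          sqrt_sq (by norm_num)]
        field_simp

/-- For any measurable `E ⊆ [0,1)^d` and `2 ≤ p < ∞`, there is a set `ξ` of `m` points with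
`(∫_{[0,1)^d} | |E| - (1/m) ∑_μ tilde χ_E(ξ^μ - z) |^p dz)^{1/p} ≤ C p^{1/2} m^{-1/2}`,
where `C` is an absolute constant. -/
theorem stmt17 :
    ∃ C : ℝ, 0 < C ∧ ∀ d : ℕ, 1 ≤ d → ∀ E : Set (Fin d → ℝ),
      MeasurableSet E → E ⊆ unitCube d → ∀ p : ℝ, 2 ≤ p → ∀ m : ℕ, 1 ≤ m →
      ∃ ξ : Fin m → Fin d → ℝ, (∀ μ, ξ μ ∈ unitCube d) ∧
        (∫ z in unitCube d,
            |(volume E).toReal - (m : ℝ)⁻¹ * ∑ μ, perChi E (ξ μ - z)| ^ p) ^ (1 / p)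
          ≤ C * p ^ ((1 : ℝ) / 2) * (m : ℝ) ^ (-(1 : ℝ) / 2) := by
  refine ⟨1, one_pos, fun d _ E hE hEc p hp m hm => ?_⟩
  set μ := volume.restrict (unitCube d)
  set K : (Fin d → ℝ) → (Fin d → ℝ) → ℝ := fun x z => (periodization E).indicator 1 (x - z)
  have hK : Measurable (Function.uncurry K) :=
    (measurable_one.indicator (measurableSet_periodization hE)).comp
      (measurable_fst.sub measurable_snd)
  have hK01 : ∀ x z, K x z ∈ Set.Icc 0 1 := fun x z => by
    by_cases h : x - z ∈ periodization E <;> simp [K, h]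
  have hcube : Measure.pi (fun _ => μ) (Set.univ.pi fun _ : Fin m => unitCube d)ᶜ = 0 := by
    rw [measure_compl (MeasurableSet.univ_pi fun _ => measurableSet_unitCube) (measure_ne_top _ _),
      Measure.pi_pi]
    simp [μ, volume_unitCube]
  obtain ⟨ξ, hξcube, hξ⟩ := exists_notMem_null_integral_abs_sub_sampleMean_rpow_le (ν := μ) hK
    hK01 (setIntegral_indicator_periodization_sub hE hEc) hm hcube (by linarith : (0 : ℝ) < p)
  refine ⟨ξ, by simpa using hξcube, ?_⟩
  simp_rw [perChi_eq_indicator hEc, one_mul]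
  exact rpow_one_div_le_of_le_two_mul_rpow (integral_nonneg fun _ => by positivity)
    (by linarith) (by exact_mod_cast hm) hξ
end
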